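/- arXiv:math/9805146 — 2 statements merged into one kernel-verified Lean document; each statement's English description precedes it below -/
import Mathlib

section
/- Let K be an abstract elementary class with amalgamation in λ. For every (M₀, M₁, a) ∈ K³_λ there is a reduced triple (M₀', M₁', a) ∈ K³_λ with (M₀, M₁, a) ≤ (M₀', M₁', a). -/
/-!
For finite `λ` every triple of `K³_λ` is already reduced: `M₀ ⊆ M₀'` are finite of the same size.
For infinite `λ`, iterate along `λ⁺` a step which, whenever the current triple `(M₀ⁱ, M₁ⁱ)` is
not reduced, extends it so that `M₀ⁱ⁺¹` contains a new point of `M₁ⁱ`, taking unions at limits.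
Each `M₁ⁱ` has size `λ` and `λ⁺` is regular, so every `M₁ⁱ` meets `⋃ⱼ M₀ʲ` inside some
`M₀ʲ`, `j < λ⁺`. A limit `δ < λ⁺` closed under `i ↦ j` then satisfies
`M₀^{δ+1} ∩ M₁^δ ⊆ M₀^δ` by continuity of the chain, so `(M₀^δ, M₁^δ)` is reduced.
-/

universe u

open Cardinal Set

/-- `i` is a limit index of a linear order: there is an index below it,
but no largest index below it. -/
def IsChainLimit {ι : Type*} [LT ι] (i : ι) : Prop :=
  (∃ j, j < i) ∧ ∀ j, j < i → ∃ k, j < k ∧ k < i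

/-- An abstract elementary class, presented concretely: the models of `K` are
(carriers of `τ`-structures on) subsets of a fixed universe `U`.  `mem M` says
that `M` is (the carrier of) a model of `K`, `le M N` is the strong substructure
relation `M ≤_K N` (which refines `⊆`), and `iso f M N` says that the function
`f` restricted to `M` is an isomorphism from the model `M` onto the model `N`.
The fields are the axioms of an abstract elementary class: closure under
isomorphism (Ax 0), reflexivity and transitivity of `≤_K` (Ax I, II), the two
axioms about unions of `≤_K`-increasing continuous chains (Ax III, IV),
coherence (Ax V) and the Löwenheim–Skolem axiom (Ax VI). -/
structure AEC (U : Type u) : Type (u + 1) where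
  mem : Set U → Prop
  le : Set U → Set U → Prop
  iso : (U → U) → Set U → Set U → Prop
  LS : Cardinal.{u}
  aleph0_le_LS : ℵ₀ ≤ LS
  le_mem_left : ∀ {M N}, le M N → mem M
  le_mem_right : ∀ {M N}, le M N → mem N
  subset_of_le : ∀ {M N}, le M N → M ⊆ N
  le_refl : ∀ {M}, mem M → le M M
  le_trans : ∀ {M N P}, le M N → le N P → le M P
  coherence : ∀ {M₀ M₁ N}, le M₀ N → le M₁ N → M₀ ⊆ M₁ → le M₀ M₁
  chain_union_mem :
    ∀ {ι : Type u} [LinearOrder ι] [WellFoundedLT ι] (M : ι → Set U),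
      Nonempty ι → (∀ i j, i ≤ j → le (M i) (M j)) →
      (∀ i, IsChainLimit i → M i = ⋃ j ∈ Set.Iio i, M j) →
      mem (⋃ i, M i)
  chain_le_union :
    ∀ {ι : Type u} [LinearOrder ι] [WellFoundedLT ι] (M : ι → Set U),
      (∀ i j, i ≤ j → le (M i) (M j)) →
      (∀ i, IsChainLimit i → M i = ⋃ j ∈ Set.Iio i, M j) →
      ∀ i, le (M i) (⋃ j, M j)
  chain_union_le :
    ∀ {ι : Type u} [LinearOrder ι] [WellFoundedLT ι] (M : ι → Set U) (N : Set U),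
      Nonempty ι → (∀ i j, i ≤ j → le (M i) (M j)) →
      (∀ i, IsChainLimit i → M i = ⋃ j ∈ Set.Iio i, M j) →
      (∀ i, le (M i) N) → le (⋃ i, M i) N
  exists_le_of_subset :
    ∀ {N : Set U}, mem N → ∀ A : Set U, A ⊆ N → #A ≤ LS →
      ∃ M, le M N ∧ A ⊆ M ∧ #M ≤ LS
  iso_injOn : ∀ {f M N}, iso f M N → Set.InjOn f M
  iso_image : ∀ {f M N}, iso f M N → f '' M = N
  iso_id : ∀ {M}, mem M → iso id M M
  iso_mem : ∀ {f M N}, iso f M N → mem M → mem N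
  iso_symm : ∀ {f M N}, iso f M N → ∃ g, iso g N M ∧ ∀ x ∈ M, g (f x) = x
  iso_comp : ∀ {f g M N P}, iso f M N → iso g N P → iso (g ∘ f) M P
  iso_le : ∀ {f M₀ M₁ N₁}, iso f M₁ N₁ → le M₀ M₁ → le (f '' M₀) N₁
  iso_restrict : ∀ {f M₀ M₁ N₁}, iso f M₁ N₁ → le M₀ M₁ → iso f M₀ (f '' M₀)

namespace AEC

variable {U : Type u} (C : AEC U)

/-- `K_lam`: the models of `K` of cardinality `lam`. -/
def Kcard (lam : Cardinal.{u}) : Set (Set U) := {M | C.mem M ∧ #M = lam}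

/-- `f` is a `≤_K`-embedding of `M` into `N`: `f` is an isomorphism from `M`
onto its image, which is a `≤_K`-submodel of `N`. -/
def Emb (f : U → U) (M N : Set U) : Prop :=
  C.iso f M (f '' M) ∧ C.le (f '' M) N

/-- `K` is categorical in `lam`: `I(lam, K) = 1`, i.e. there is exactly one
model of cardinality `lam` up to isomorphism. -/
def Categorical (lam : Cardinal.{u}) : Prop :=
  (C.Kcard lam).Nonempty ∧
    ∀ M ∈ C.Kcard lam, ∀ N ∈ C.Kcard lam, ∃ f, C.iso f M N

/-- `M₀` is an amalgamation base (Definition 0.12(5)). -/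
def AmalgBase (M₀ : Set U) : Prop :=
  C.mem M₀ ∧ ∀ M₁ M₂ f₁ f₂, M₁ ∈ C.Kcard #M₀ → M₂ ∈ C.Kcard #M₀ →
    C.Emb f₁ M₀ M₁ → C.Emb f₂ M₀ M₂ →
    ∃ M₃ g₁ g₂, M₃ ∈ C.Kcard #M₀ ∧ C.Emb g₁ M₁ M₃ ∧ C.Emb g₂ M₂ M₃ ∧
      ∀ x ∈ M₀, g₁ (f₁ x) = g₂ (f₂ x)

/-- `K` has amalgamation in `lam`. -/
def Amalg (lam : Cardinal.{u}) : Prop := ∀ M₀ ∈ C.Kcard lam, C.AmalgBase M₀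

/-- `(M, N, a)` is a triple defining the type `tp(a, M, N)` over `M`:
`M ≤_K N ∈ K_{‖M‖}` and `a ∈ N`. -/
def TypeTriple (M N : Set U) (a : U) : Prop :=
  C.le M N ∧ N ∈ C.Kcard #M ∧ a ∈ N

/-- The atomic relation `E^at_M` of equality of types over `M`
(Definition 0.12(1)). -/
def EqAt (M N₁ : Set U) (a₁ : U) (N₂ : Set U) (a₂ : U) : Prop :=
  ∃ (N : Set U) (f₁ f₂ : U → U), N ∈ C.Kcard #M ∧
    C.Emb f₁ N₁ N ∧ C.Emb f₂ N₂ N ∧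
    (∀ x ∈ M, f₁ x = x) ∧ (∀ x ∈ M, f₂ x = x) ∧ f₁ a₁ = f₂ a₂

/-- `E_M`, the transitive closure of `E^at_M` on type triples; two triples are
`E_M`-related iff they define the same type over `M`. -/
def EqType (M : Set U) : Set U × U → Set U × U → Prop :=
  Relation.TransGen (fun p q : Set U × U =>
    C.TypeTriple M p.1 p.2 ∧ C.TypeTriple M q.1 q.2 ∧ C.EqAt M p.1 p.2 q.1 q.2)

/-- `a` realizes the type `tp(b, M, N₀)` in `N` (Definition 0.12(3)). -/
def Realizes (M N : Set U) (a : U) (N₀ : Set U) (b : U) : Prop :=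
  ∃ N', C.le M N' ∧ C.le N' N ∧ N' ∈ C.Kcard #M ∧ a ∈ N' ∧
    C.EqType M (N', a) (N₀, b)

/-- `a` strongly realizes `(M, N₀, b)/E^at_M` in `N` (Definition 0.12(4)). -/
def StronglyRealizes (M N : Set U) (a : U) (N₀ : Set U) (b : U) : Prop :=
  ∃ N', C.le M N' ∧ C.le N' N ∧ N' ∈ C.Kcard #M ∧ a ∈ N' ∧
    C.EqAt M N' a N₀ b

/-- `tp(a₀, M₀, N₀) ≤ tp(a₁, M₁, N₁)`: the type over `M₀` is the restriction
to `M₀` of the type over `M₁` (Definition 0.16(6)). -/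
def TypeLE (M₀ N₀ : Set U) (a₀ : U) (M₁ N₁ : Set U) (a₁ : U) : Prop :=
  C.le M₀ M₁ ∧ ∃ N a, C.mem N ∧ C.le M₁ N ∧ a ∈ N ∧
    C.Realizes M₀ N a N₀ a₀ ∧ C.Realizes M₁ N a N₁ a₁

/-- The number of types over `M`, i.e. `|S(M)|`. -/
def typeCount (M : Set U) : Cardinal.{u} :=
  #(Quot fun p q : {x : Set U × U // C.TypeTriple M x.1 x.2} =>
      C.EqType M p.1 q.1)

/-- `K` is stable in `lam`: `|S(M)| ≤ lam` for every `M ∈ K_lam`. -/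
def StableIn (lam : Cardinal.{u}) : Prop :=
  ∀ M ∈ C.Kcard lam, C.typeCount M ≤ lam

/-- `N` is universal over `M` (Definition 0.16(2)). -/
def UniversalOver (N M : Set U) : Prop :=
  C.le M N ∧ ∀ N', C.le M N' → #N' ≤ #N →
    ∃ f, C.Emb f N' N ∧ ∀ x ∈ M, f x = x

/-- `N₁` is `(lam, κ)`-saturated over `N`: there is a `≤_K`-increasing
continuous chain of length `κ` from `N` to `N₁` each of whose successor steps
is a universal extension in `K_lam` (Definition 0.21). -/
def SaturatedOver (lam : Cardinal.{u}) (κ : Ordinal.{u}) (N₁ N : Set U) : Prop :=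
  ∃ Mc : Ordinal.{u} → Set U,
    Mc 0 = N ∧ Mc κ = N₁ ∧
    (∀ i j, i ≤ j → j ≤ κ → C.le (Mc i) (Mc j)) ∧
    (∀ i, i ≤ κ → Order.IsSuccLimit i → Mc i = ⋃ j ∈ Set.Iio i, Mc j) ∧
    ∀ i, i < κ → Mc (i + 1) ∈ C.Kcard lam ∧ C.UniversalOver (Mc (i + 1)) (Mc i)

/-- `(M₀, M₁, a) ∈ K³_lam` (Definition 2.3A(1)). -/
def K3 (lam : Cardinal.{u}) (M₀ M₁ : Set U) (a : U) : Prop :=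
  M₀ ∈ C.Kcard lam ∧ M₁ ∈ C.Kcard lam ∧ C.le M₀ M₁ ∧ a ∈ M₁ ∧ a ∉ M₀

/-- The extension property of a triple `(M₀, M₁, a) ∈ K³_lam`
(Definition 2.3A(3)). -/
def ExtProp (lam : Cardinal.{u}) (M₀ M₁ : Set U) (a : U) : Prop :=
  ∀ N₀ f, N₀ ∈ C.Kcard lam → C.Emb f M₀ N₀ →
    ∃ N₁ g, C.K3 lam N₀ N₁ (g a) ∧ C.Emb g M₁ N₁ ∧ ∀ x ∈ M₀, g x = f x

/-- `(M₀, M₁, a) ∈ K³_lam` is reduced (Definition 2.3B(2)). -/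
def Reduced (lam : Cardinal.{u}) (M₀ M₁ : Set U) (a : U) : Prop :=
  C.K3 lam M₀ M₁ a ∧ ∀ M₀' M₁', C.K3 lam M₀' M₁' a →
    C.le M₀ M₀' → C.le M₁ M₁' → M₀' ∩ M₁ = M₀

/-- `(M₀, M₁, a) ∈ K³_lam` is minimal (Definition 2.3B(1)). -/
def MinimalTriple (lam : Cardinal.{u}) (M₀ M₁ : Set U) (a : U) : Prop :=
  C.K3 lam M₀ M₁ a ∧
  ∀ M₀' N₁ N₂ h₁ h₂,
    C.K3 lam M₀' N₁ (h₁ a) → C.K3 lam M₀' N₂ (h₂ a) →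
    C.Emb h₁ M₀ M₀' → C.Emb h₁ M₁ N₁ →
    C.Emb h₂ M₀ M₀' → C.Emb h₂ M₁ N₂ →
    C.EqType M₀' (N₁, h₁ a) (N₂, h₂ a)

/-- The type `tp(a, M₀, N)` is minimal (Definition 2.3B(3)). -/
def MinimalType (lam : Cardinal.{u}) (M₀ N : Set U) (a : U) : Prop :=
  ∃ M₁ b, C.EqType M₀ (M₁, b) (N, a) ∧ C.MinimalTriple lam M₀ M₁ b

/-- The type `tp(a, M₀, N)` is reduced (Definition 2.3B(4)). -/
def ReducedType (lam : Cardinal.{u}) (M₀ N : Set U) (a : U) : Prop :=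
  ∃ M₁ b, C.EqType M₀ (M₁, b) (N, a) ∧ C.Reduced lam M₀ M₁ b

/-- The type `tp(a, M, N)` is algebraic: it is realized in `M` itself. -/
def Algebraic (M N : Set U) (a : U) : Prop := ∃ c, C.Realizes M M c N a

/-- The type `tp(a, M, N)` is inevitable (Definition 5.1). -/
def Inevitable (M N : Set U) (a : U) : Prop :=
  ∀ M', C.le M M' → M ≠ M' → ∃ c, C.Realizes M M' c N a

/-- `(M₀, M₁, M₂) ∈ K^uniq_lam`: any two disjoint amalgams of `M₁` and `M₂`
over `M₀` in `K_lam` are equivalent (Definition 6.1(1)). -/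
def Kuniq (lam : Cardinal.{u}) (M₀ M₁ M₂ : Set U) : Prop :=
  M₀ ∈ C.Kcard lam ∧ M₁ ∈ C.Kcard lam ∧ M₂ ∈ C.Kcard lam ∧
  C.le M₀ M₁ ∧ C.le M₀ M₂ ∧
  ∀ N₁ N₂ g₁₀ g₁₁ g₁₂ g₂₀ g₂₁ g₂₂,
    N₁ ∈ C.Kcard lam → N₂ ∈ C.Kcard lam →
    C.Emb g₁₀ M₀ N₁ → C.Emb g₁₁ M₁ N₁ → C.Emb g₁₂ M₂ N₁ →
    (∀ x ∈ M₀, g₁₁ x = g₁₀ x) → (∀ x ∈ M₀, g₁₂ x = g₁₀ x) →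
    g₁₁ '' M₁ ∩ g₁₂ '' M₂ = g₁₀ '' M₀ →
    C.Emb g₂₀ M₀ N₂ → C.Emb g₂₁ M₁ N₂ → C.Emb g₂₂ M₂ N₂ →
    (∀ x ∈ M₀, g₂₁ x = g₂₀ x) → (∀ x ∈ M₀, g₂₂ x = g₂₀ x) →
    g₂₁ '' M₁ ∩ g₂₂ '' M₂ = g₂₀ '' M₀ →
    ∃ N f₁ f₂, N ∈ C.Kcard lam ∧ C.Emb f₁ N₁ N ∧ C.Emb f₂ N₂ N ∧
      (∀ x ∈ M₀, f₁ (g₁₀ x) = f₂ (g₂₀ x)) ∧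
      (∀ x ∈ M₁, f₁ (g₁₁ x) = f₂ (g₂₁ x)) ∧
      (∀ x ∈ M₂, f₁ (g₁₂ x) = f₂ (g₂₂ x))

/-- `K_lam` has disjoint amalgamation. -/
def DisjAmalg (lam : Cardinal.{u}) : Prop :=
  ∀ M₀ M₁ M₂, M₀ ∈ C.Kcard lam → M₁ ∈ C.Kcard lam → M₂ ∈ C.Kcard lam →
    C.le M₀ M₁ → C.le M₀ M₂ →
    ∃ N f₁ f₂, N ∈ C.Kcard lam ∧ C.Emb f₁ M₁ N ∧ C.Emb f₂ M₂ N ∧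
      (∀ x ∈ M₀, f₁ x = f₂ x) ∧ f₁ '' M₁ ∩ f₂ '' M₂ = f₁ '' M₀

/-- `(M₀, M₂) ∈ K^{3,uq}_lam`: `M₀ <_K M₂` in `K_lam` and every triple
`(M₀, M₁, M₂)` has unique (disjoint) amalgamation (Definition 6.1(2)). -/
def K3uq (lam : Cardinal.{u}) (M₀ M₂ : Set U) : Prop :=
  M₀ ∈ C.Kcard lam ∧ M₂ ∈ C.Kcard lam ∧ C.le M₀ M₂ ∧ M₀ ≠ M₂ ∧
  ∀ M₁, M₁ ∈ C.Kcard lam → C.le M₀ M₁ → C.Kuniq lam M₀ M₁ M₂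

/-- `NF_{lam,(δ₁,δ₂,δ₃)}(N₀, N₁, N₂, N₃)`: `N₁, N₂` are saturated and smoothly
amalgamated in `N₃` over `N₀`, witnessed by continuous chains of copies of the
unique-amalgamation pair `(Ms, Ns)` (Definition 8.1). -/
def NFd (lam : Cardinal.{u}) (Ms Ns : Set U) (δ₁ δ₂ δ₃ : Ordinal.{u})
    (N₀ N₁ N₂ N₃ : Set U) : Prop :=
  N₀ ∈ C.Kcard lam ∧ N₁ ∈ C.Kcard lam ∧ N₂ ∈ C.Kcard lam ∧ N₃ ∈ C.Kcard lam ∧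
  C.le N₀ N₁ ∧ C.le N₀ N₂ ∧ C.le N₁ N₃ ∧ C.le N₂ N₃ ∧
  N₁ ∩ N₂ = N₀ ∧
  C.SaturatedOver lam δ₁.cof.ord N₁ N₀ ∧
  C.SaturatedOver lam δ₂.cof.ord N₂ N₀ ∧
  ∃ N1c N2c : Ordinal.{u} → Set U,
    N1c 0 = N₀ ∧ N1c (lam.ord * δ₁) = N₁ ∧ N2c 0 = N₂ ∧
    (∀ i j, i ≤ j → j ≤ lam.ord * δ₁ → C.le (N1c i) (N1c j)) ∧
    (∀ i j, i ≤ j → j ≤ lam.ord * δ₁ → C.le (N2c i) (N2c j)) ∧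
    (∀ i, i ≤ lam.ord * δ₁ → Order.IsSuccLimit i →
      (N1c i = ⋃ j ∈ Set.Iio i, N1c j) ∧ (N2c i = ⋃ j ∈ Set.Iio i, N2c j)) ∧
    (∀ i, i < lam.ord * δ₁ →
      ∃ f, C.iso f Ns (N1c (i + 1)) ∧ f '' Ms = N1c i) ∧
    (∀ i, i ≤ lam.ord * δ₁ → N2c i ∩ N₁ = N1c i) ∧
    C.SaturatedOver lam δ₃.cof.ord N₃ (N2c (lam.ord * δ₁))

/-- `NF_lam(N₀, N₁, N₂, N₃)`: `N₁, N₂` are smoothly amalgamated over `N₀`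
inside `N₃` (Definition 8.2). -/
def NF (lam : Cardinal.{u}) (Ms Ns : Set U) (N₀ N₁ N₂ N₃ : Set U) : Prop :=
  ∃ M₀ M₁ M₂ M₃ : Set U,
    C.NFd lam Ms Ns lam.ord lam.ord lam.ord M₀ M₁ M₂ M₃ ∧
    N₀ = M₀ ∧ C.le N₁ M₁ ∧ C.le N₂ M₂ ∧ C.le N₃ M₃ ∧
    C.SaturatedOver lam lam.ord.cof.ord M₁ N₀ ∧
    C.SaturatedOver lam lam.ord.cof.ord M₂ N₀


end AEC

theorem isChainLimit_iff_isSuccLimit {ι : Type*} [Preorder ι] {i : ι} :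
    IsChainLimit i ↔ Order.IsSuccLimit i := by
  simp [IsChainLimit, Order.isSuccLimit_iff, Order.IsSuccPrelimit, CovBy, not_isMin_iff]

namespace Ordinal

theorem biUnion_Iio_typein {α : Type*} {o : Ordinal.{u}} (S : Ordinal.{u} → Set α)
    (x : o.ToType) :
    ⋃ y ∈ Iio x, S (typein (α := o.ToType) (· < ·) y) =
      ⋃ j < typein (α := o.ToType) (· < ·) x, S j := by
  ext b
  simp only [mem_iUnion, mem_Iio, exists_prop]
  constructor
  · rintro ⟨y, hyx, hb⟩
    exact ⟨_, (typein_lt_typein _).2 hyx, hb⟩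
  · rintro ⟨j, hj, hb⟩
    obtain ⟨y, rfl⟩ := typein_surj (α := o.ToType) (· < ·)
      (by rw [type_toType]; exact hj.trans (typein_lt_self x))
    exact ⟨y, (typein_lt_typein _).1 hj, hb⟩

theorem iUnion_typein {α : Type*} {o : Ordinal.{u}} (S : Ordinal.{u} → Set α) :
    ⋃ x : o.ToType, S (typein (α := o.ToType) (· < ·) x) = ⋃ j < o, S j := by
  ext b
  simp only [mem_iUnion, exists_prop]
  constructor
  · rintro ⟨x, hb⟩
    exact ⟨_, typein_lt_self x, hb⟩
  · rintro ⟨j, hj, hb⟩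
    obtain ⟨x, rfl⟩ := typein_surj (α := o.ToType) (· < ·) (by rwa [type_toType])
    exact ⟨x, hb⟩

noncomputable def iterateSup {α : Type*} [CompleteLattice α] (next : α → α) (p : α)
    (o : Ordinal.{u}) : α :=
  limitRecOn o p (fun _ q => next q) fun o _ T => ⨆ j, ⨆ h : j < o, T j h

section iterateSup

variable {α : Type*} [CompleteLattice α] (next : α → α) (p : α)

@[simp]
theorem iterateSup_zero : iterateSup next p 0 = p :=
  limitRecOn_zero _ _ _

@[simp]
theorem iterateSup_add_one (o : Ordinal.{u}) :
    iterateSup next p (o + 1) = next (iterateSup next p o) :=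
  limitRecOn_add_one _ _ _ _

theorem iterateSup_limit {o : Ordinal.{u}} (ho : Order.IsSuccLimit o) :
    iterateSup next p o = ⨆ j < o, iterateSup next p j :=
  limitRecOn_limit _ _ _ _ ho

end iterateSup

section iterateSupProd

variable {α β : Type*} [CompleteLattice α] [CompleteLattice β] (next : α × β → α × β)
  (p : α × β) {o : Ordinal.{u}}

theorem fst_iterateSup_limit (ho : Order.IsSuccLimit o) :
    (iterateSup next p o).1 = ⨆ j < o, (iterateSup next p j).1 := by
  simp only [iterateSup_limit next p ho, Prod.fst_iSup]

theorem snd_iterateSup_limit (ho : Order.IsSuccLimit o) :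
    (iterateSup next p o).2 = ⨆ j < o, (iterateSup next p j).2 := by
  simp only [iterateSup_limit next p ho, Prod.snd_iSup]

end iterateSupProd

theorem exists_closed_isSuccLimit {c : Ordinal.{u}} (hc : ℵ₀ < c.cof)
    {F : Ordinal.{u} → Ordinal.{u}} (hF : ∀ i < c, i < F i ∧ F i < c) :
    ∃ δ < c, Order.IsSuccLimit δ ∧ ∀ γ < δ, ∃ i < δ, γ ≤ i ∧ F i < δ := by
  have hc₀ : 0 < c := pos_iff_ne_zero.2 fun h => by simp [h] at hc
  have hlt : ∀ n, F^[n] 0 < c := by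
    intro n
    induction n with
    | zero => exact hc₀
    | succ n ih => rw [Function.iterate_succ_apply']; exact (hF _ ih).2
  have hstrict : ∀ n, F^[n] 0 < F^[n + 1] 0 := fun n => by
    rw [Function.iterate_succ_apply']; exact (hF _ (hlt n)).1
  have hbelow : ∀ n, F^[n] 0 < nfp F 0 := fun n =>
    (hstrict n).trans_le (iterate_le_nfp F 0 _)
  refine ⟨nfp F 0, nfp_lt_ord hc (fun i hi => (hF i hi).2) hc₀, ?_, fun γ hγ => ?_⟩
  · rw [isSuccLimit_iff, Order.isSuccPrelimit_iff_succ_lt]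
    refine ⟨(hbelow 0).ne', fun γ hγ => ?_⟩
    obtain ⟨n, hn⟩ := lt_nfp_iff.1 hγ
    exact (Order.succ_le_of_lt hn).trans_lt (hbelow n)
  · obtain ⟨n, hn⟩ := lt_nfp_iff.1 hγ
    refine ⟨F^[n] 0, hbelow n, hn.le, ?_⟩
    rw [← Function.iterate_succ_apply' F n]
    exact hbelow (n + 1)

theorem exists_lt_inter_iUnion_subset {α : Type u} {c : Ordinal.{u}}
    (hc : Order.IsSuccLimit c) {A : Ordinal.{u} → Set α}
    (hA : ∀ i j, i ≤ j → j < c → A i ⊆ A j) {s : Set α} (hs : #s < c.cof)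
    {i : Ordinal.{u}} (hi : i < c) :
    ∃ j, i < j ∧ j < c ∧ s ∩ ⋃ k < c, A k ⊆ A j := by
  have hlevel : ∀ x : ↥(s ∩ ⋃ k < c, A k), ∃ γ < c, (x : α) ∈ A γ := fun x => by
    simpa using x.2.2
  choose γ hγc hγ using hlevel
  have hsup : ⨆ x, γ x < c :=
    iSup_lt_of_lt_cof ((mk_le_mk_of_subset inter_subset_left).trans_lt hs) hγc
  have hj : Order.succ (max (⨆ x, γ x) i) < c := hc.succ_lt (max_lt hsup hi)
  refine ⟨_, (le_max_right _ i).trans_lt (Order.lt_succ _), hj, fun x hx => ?_⟩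
  refine hA _ _ ?_ hj (hγ ⟨x, hx⟩)
  exact ((Ordinal.le_iSup γ ⟨x, hx⟩).trans (le_max_left _ i)).trans (Order.le_succ _)

theorem exists_inter_iUnion_subset {α : Type u} {c : Ordinal.{u}} (hc : ℵ₀ < c.cof)
    {A B : Ordinal.{u} → Set α}
    (hA : ∀ i j, i ≤ j → j < c → A i ⊆ A j) (hB : ∀ i j, i ≤ j → j < c → B i ⊆ B j)
    (hBlim : ∀ i < c, Order.IsSuccLimit i → B i ⊆ ⋃ j < i, B j)
    (hBcard : ∀ i < c, #(B i) < c.cof) :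
    ∃ δ < c, B δ ∩ ⋃ j < c, A j ⊆ A δ := by
  have hclim : Order.IsSuccLimit c := one_lt_cof_iff.1 (one_lt_aleph0.trans hc)
  choose! F hF using fun i hi => exists_lt_inter_iUnion_subset hclim hA (hBcard i hi) hi
  -- `F i` is a stage by which every point of `B i` that ever enters `A` has entered it;
  -- a limit `δ` closed under `F` works because `B` is continuous at `δ`.
  obtain ⟨δ, hδc, hδlim, hδ⟩ :=
    exists_closed_isSuccLimit hc fun i hi => ⟨(hF i hi).1, (hF i hi).2.1⟩
  refine ⟨δ, hδc, fun x ⟨hxB, hxA⟩ => ?_⟩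
  obtain ⟨γ, hγδ, hxγ⟩ := mem_iUnion₂.1 (hBlim δ hδc hδlim hxB)
  obtain ⟨i, hiδ, hγi, hFi⟩ := hδ γ hγδ
  have hic : i < c := hiδ.trans hδc
  exact hA _ _ hFi.le hδc ((hF i hic).2.2 ⟨hB γ i hγi hic hxγ, hxA⟩)

end Ordinal

namespace AEC

variable {U : Type u} (C : AEC U)

def IsContinuousChain (S : Ordinal.{u} → Set U) (o : Ordinal.{u}) : Prop :=
  (∀ i j, i ≤ j → j < o → C.le (S i) (S j)) ∧
    ∀ i < o, Order.IsSuccLimit i → S i = ⋃ j < i, S j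

namespace IsContinuousChain

variable {C} {S : Ordinal.{u} → Set U} {o : Ordinal.{u}}

open Ordinal in
/-- The chain axioms of `AEC` quantify over index types in `Type u`; `o.ToType` is one,
and `typein` identifies it with the ordinals below `o`. -/
theorem comp_typein (hS : C.IsContinuousChain S o) :
    (∀ x y : o.ToType, x ≤ y →
      C.le (S (typein (α := o.ToType) (· < ·) x)) (S (typein (α := o.ToType) (· < ·) y))) ∧
    ∀ x : o.ToType, IsChainLimit x →
      S (typein (α := o.ToType) (· < ·) x) = ⋃ y ∈ Iio x, S (typein (α := o.ToType) (· < ·) y) :=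
  ⟨fun x y hxy => hS.1 _ _ ((typein_le_typein' o).2 hxy) (typein_lt_self y), fun x hx => by
    rw [biUnion_Iio_typein]
    exact hS.2 _ (typein_lt_self x)
      ((typein _).isSuccLimit_apply_iff.2 (isChainLimit_iff_isSuccLimit.1 hx))⟩

theorem union_mem (hS : C.IsContinuousChain S o) (ho : o ≠ 0) : C.mem (⋃ j < o, S j) := by
  have : Nonempty o.ToType := Ordinal.nonempty_toType_iff.2 ho
  rw [← Ordinal.iUnion_typein]
  exact C.chain_union_mem _ this hS.comp_typein.1 hS.comp_typein.2

theorem le_union (hS : C.IsContinuousChain S o) {i : Ordinal.{u}} (hi : i < o) :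
    C.le (S i) (⋃ j < o, S j) := by
  obtain ⟨x, rfl⟩ := Ordinal.typein_surj (α := o.ToType) (· < ·) (by rwa [Ordinal.type_toType])
  rw [← Ordinal.iUnion_typein]
  exact C.chain_le_union _ hS.comp_typein.1 hS.comp_typein.2 x

theorem union_le (hS : C.IsContinuousChain S o) (ho : o ≠ 0) {N : Set U}
    (hN : ∀ i < o, C.le (S i) N) : C.le (⋃ j < o, S j) N := by
  have : Nonempty o.ToType := Ordinal.nonempty_toType_iff.2 ho
  rw [← Ordinal.iUnion_typein]
  exact C.chain_union_le _ N this hS.comp_typein.1 hS.comp_typein.2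
    fun x => hN _ (Ordinal.typein_lt_self x)

theorem union_mem_Kcard (hS : C.IsContinuousChain S o) (ho : o ≠ 0) {lam : Cardinal.{u}}
    (hlam : ℵ₀ ≤ lam) (hcard : o.card ≤ lam) (hK : ∀ i < o, S i ∈ C.Kcard lam) :
    (⋃ j < o, S j) ∈ C.Kcard lam := by
  have h₀ : 0 < o := pos_iff_ne_zero.2 ho
  refine ⟨hS.union_mem ho, le_antisymm ?_ ?_⟩
  · exact mk_biUnion_le_of_le hcard hlam S fun i hi => (hK i hi).2.le
  · rw [← (hK 0 h₀).2]
    exact mk_le_mk_of_subset (subset_iUnion₂ (s := fun j (_ : j < o) => S j) 0 h₀)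

end IsContinuousChain

theorem K3_union {lam : Cardinal.{u}} (hlam : ℵ₀ ≤ lam) {S₀ S₁ : Ordinal.{u} → Set U}
    {o : Ordinal.{u}} {a : U} (h₀ : C.IsContinuousChain S₀ o) (h₁ : C.IsContinuousChain S₁ o)
    (ho : o ≠ 0) (hcard : o.card ≤ lam) (hK3 : ∀ i < o, C.K3 lam (S₀ i) (S₁ i) a) :
    C.K3 lam (⋃ j < o, S₀ j) (⋃ j < o, S₁ j) a := by
  have h0 : 0 < o := pos_iff_ne_zero.2 ho
  refine ⟨h₀.union_mem_Kcard ho hlam hcard fun i hi => (hK3 i hi).1,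
    h₁.union_mem_Kcard ho hlam hcard fun i hi => (hK3 i hi).2.1,
    h₀.union_le ho fun i hi => C.le_trans (hK3 i hi).2.2.1 (h₁.le_union hi),
    mem_iUnion₂.2 ⟨0, h0, (hK3 0 h0).2.2.2.1⟩, ?_⟩
  simp only [mem_iUnion, not_exists]
  exact fun i hi => (hK3 i hi).2.2.2.2

theorem K3_iterateSup {lam : Cardinal.{u}} (hlam : ℵ₀ ≤ lam) {a : U}
    {next : Set U × Set U → Set U × Set U}
    (hnext : ∀ p : Set U × Set U, C.K3 lam p.1 p.2 a →
      C.K3 lam (next p).1 (next p).2 a ∧ C.le p.1 (next p).1 ∧ C.le p.2 (next p).2)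
    {p : Set U × Set U} (hp : C.K3 lam p.1 p.2 a) {o : Ordinal.{u}} (ho : o.card ≤ lam) :
    C.K3 lam (Ordinal.iterateSup next p o).1 (Ordinal.iterateSup next p o).2 a ∧
      ∀ i ≤ o, C.le (Ordinal.iterateSup next p i).1 (Ordinal.iterateSup next p o).1 ∧
        C.le (Ordinal.iterateSup next p i).2 (Ordinal.iterateSup next p o).2 := by
  induction o using Ordinal.limitRecOn with
  | zero =>
    simp only [Ordinal.iterateSup_zero, nonpos_iff_eq_zero, forall_eq]
    exact ⟨hp, C.le_refl hp.1.1, C.le_refl hp.2.1.1⟩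
  | add_one o ih =>
    obtain ⟨hK3, hle⟩ := ih ((Ordinal.card_le_card le_self_add).trans ho)
    obtain ⟨hK3', hle₀, hle₁⟩ := hnext _ hK3
    rw [← Ordinal.iterateSup_add_one next p o] at hK3' hle₀ hle₁
    refine ⟨hK3', fun i hi => ?_⟩
    rcases hi.lt_or_eq with hi | rfl
    · obtain ⟨h₀, h₁⟩ := hle i (Order.lt_add_one_iff.1 hi)
      exact ⟨C.le_trans h₀ hle₀, C.le_trans h₁ hle₁⟩
    · exact ⟨C.le_refl hK3'.1.1, C.le_refl hK3'.2.1.1⟩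
  | limit o hlim ih =>
    have ih' : ∀ j < o, _ := fun j hj => ih j hj ((Ordinal.card_le_card hj.le).trans ho)
    have hchain₀ : C.IsContinuousChain (fun j => (Ordinal.iterateSup next p j).1) o :=
      ⟨fun i j hij hj => ((ih' j hj).2 i hij).1,
        fun i _ hi => Ordinal.fst_iterateSup_limit next p hi⟩
    have hchain₁ : C.IsContinuousChain (fun j => (Ordinal.iterateSup next p j).2) o :=
      ⟨fun i j hij hj => ((ih' j hj).2 i hij).2,
        fun i _ hi => Ordinal.snd_iterateSup_limit next p hi⟩
    have hK3 : C.K3 lam (Ordinal.iterateSup next p o).1 (Ordinal.iterateSup next p o).2 a := by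
      rw [Ordinal.fst_iterateSup_limit next p hlim, Ordinal.snd_iterateSup_limit next p hlim]
      exact C.K3_union hlam hchain₀ hchain₁ hlim.ne_bot ho fun i hi => (ih' i hi).1
    refine ⟨hK3, fun i hi => ?_⟩
    rcases hi.lt_or_eq with hi | rfl
    · rw [Ordinal.fst_iterateSup_limit next p hlim, Ordinal.snd_iterateSup_limit next p hlim]
      exact ⟨hchain₀.le_union hi, hchain₁.le_union hi⟩
    · exact ⟨C.le_refl hK3.1.1, C.le_refl hK3.2.1.1⟩

theorem reduced_of_lt_aleph0 {lam : Cardinal.{u}} (hlam : lam < ℵ₀) {M₀ M₁ : Set U} {a : U}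
    (h : C.K3 lam M₀ M₁ a) : C.Reduced lam M₀ M₁ a := by
  refine ⟨h, fun N₀ N₁ hN hle₀ _ => ?_⟩
  have hfin : N₀.Finite := by rw [← lt_aleph0_iff_set_finite, hN.1.2]; exact hlam
  have hcard : N₀.ncard ≤ M₀.ncard := by
    rw [← Nat.card_coe_set_eq, ← Nat.card_coe_set_eq, Nat.card, Nat.card, h.1.2, hN.1.2]
  rw [← Set.eq_of_subset_of_ncard_le (C.subset_of_le hle₀) hcard hfin]
  exact inter_eq_self_of_subset_left (C.subset_of_le h.2.2.1)

theorem exists_extension_reduced_of_inter_subset {lam : Cardinal.{u}} {M₀ M₁ : Set U} {a : U}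
    (h : C.K3 lam M₀ M₁ a) :
    ∃ N : Set U × Set U, (C.K3 lam N.1 N.2 a ∧ C.le M₀ N.1 ∧ C.le M₁ N.2) ∧
      (N.1 ∩ M₁ ⊆ M₀ → C.Reduced lam M₀ M₁ a) := by
  by_cases hred : C.Reduced lam M₀ M₁ a
  · exact ⟨(M₀, M₁), ⟨h, C.le_refl h.1.1, C.le_refl h.2.1.1⟩, fun _ => hred⟩
  obtain ⟨N₀, N₁, hN, hle₀, hle₁, hne⟩ :
      ∃ N₀ N₁, C.K3 lam N₀ N₁ a ∧ C.le M₀ N₀ ∧ C.le M₁ N₁ ∧ N₀ ∩ M₁ ≠ M₀ := by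
    simpa [Reduced, h] using hred
  refine ⟨(N₀, N₁), ⟨hN, hle₀, hle₁⟩, fun hsub => absurd ?_ hne⟩
  exact hsub.antisymm (subset_inter (C.subset_of_le hle₀) (C.subset_of_le h.2.2.1))

theorem exists_reduced_above (lam : Cardinal.{u})
    (M₀ M₁ : Set U) (a : U) (h : C.K3 lam M₀ M₁ a) :
    ∃ M₀' M₁', C.le M₀ M₀' ∧ C.le M₁ M₁' ∧ C.Reduced lam M₀' M₁' a := by
  rcases lt_or_ge lam ℵ₀ with hfin | hlam
  · exact ⟨M₀, M₁, C.le_refl h.1.1, C.le_refl h.2.1.1, C.reduced_of_lt_aleph0 hfin h⟩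
  choose! next hnext hred using fun p : Set U × Set U =>
    C.exists_extension_reduced_of_inter_subset (M₀ := p.1) (M₁ := p.2) (a := a)
  set T := Ordinal.iterateSup next (M₀, M₁)
  set c := (Order.succ lam).ord
  have hT : ∀ o < c, _ := fun o ho =>
    C.K3_iterateSup hlam hnext (p := (M₀, M₁)) h (Order.lt_succ_iff.1 (lt_ord.1 ho))
  have hcof : c.cof = Order.succ lam := (Cardinal.isRegular_succ hlam).cof_ord
  obtain ⟨δ, hδc, hδ⟩ := Ordinal.exists_inter_iUnion_subset (A := fun o => (T o).1)
    (B := fun o => (T o).2) (hcof ▸ hlam.trans_lt (Order.lt_succ lam))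
    (fun i j hij hj => C.subset_of_le ((hT j hj).2 i hij).1)
    (fun i j hij hj => C.subset_of_le ((hT j hj).2 i hij).2)
    (fun i _ hi => (Ordinal.snd_iterateSup_limit next _ hi).subset)
    (fun i hi => hcof ▸ (hT i hi).1.2.1.2.trans_lt (Order.lt_succ lam))
  have hclim : Order.IsSuccLimit c := isSuccLimit_ord (hlam.trans (Order.le_succ lam))
  have hstable : (next (T δ)).1 ∩ (T δ).2 ⊆ (T δ).1 := fun x hx => hδ ⟨hx.2, mem_iUnion₂.2
    ⟨δ + 1, hclim.add_one_lt hδc, by simpa [T] using hx.1⟩⟩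
  obtain ⟨hK3δ, hleδ⟩ := hT δ hδc
  obtain ⟨hle₀, hle₁⟩ := hleδ 0 (zero_le (a := δ))
  rw [Ordinal.iterateSup_zero] at hle₀ hle₁
  exact ⟨(T δ).1, (T δ).2, hle₀, hle₁, hred _ hK3δ hstable⟩

end AEC
end

section
/- Let K be an abstract elementary class. If (M_{0,α}, M_{1,α}, a)_{α < δ} is an increasing sequence of reduced triples in K³_λ with δ < λ⁺ a limit ordinal, then (⋃_{α<δ} M_{0,α}, ⋃_{α<δ} M_{1,α}, a) is a reduced triple in K³_λ. -/
/-! The chain axioms of an AEC speak only about continuous chains. An arbitrary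
`≤_K`-increasing chain `(M j)_{j < i}`, `i` a limit, is made continuous by replacing `M k`
at every limit `k` by `⋃_{j < k} M j`. By induction on `i`, that union is already the
`≤_K`-least upper bound of `(M j)_{j < k}`, so the smoothed chain is still increasing, has the
same union and the same upper bounds as `M`, and the chain axioms apply to it.

Both unions of the theorem are thus models, of size `λ` since they consist of `|δ| ≤ λ` pieces
of size `λ`, and `⋃ M₀ ≤_K ⋃ M₁`. Reducedness passes to the union: an element of
`M₀' ∩ ⋃ M₁` lies in some `M₀' ∩ M₁ β`, which is `M₀ β` because `(M₀ β, M₁ β, a)` is reduced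
and `(M₀', M₁', a)` lies above it. -/

universe u

open Cardinal Set

namespace AEC

variable {U : Type u} (C : AEC U)

theorem _root_.isChainLimit_iff_isSuccLimit_s13 {α : Type*} [Preorder α] {a : α} :
    IsChainLimit a ↔ Order.IsSuccLimit a := by
  constructor
  · rintro ⟨hbelow, hdense⟩
    exact ⟨not_isMin_iff.2 hbelow, fun b hb => let ⟨c, hbc, hca⟩ := hdense b hb.lt; hb.2 hbc hca⟩
  · rintro ⟨hnotMin, hprelim⟩
    exact ⟨not_isMin_iff.1 hnotMin, fun b hb => (not_covBy_iff hb).1 (hprelim b)⟩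

def IsStrongSup (S : Set (Set U)) (N : Set U) : Prop :=
  (∀ M ∈ S, C.le M N) ∧ ∀ P, (∀ M ∈ S, C.le M P) → C.le N P

section Smoothing

variable {ι : Type u} [LinearOrder ι]

open Classical in
def smoothing (M : ι → Set U) (k : ι) : Set U :=
  if IsChainLimit k then ⋃ j ∈ Iio k, M j else M k

variable {C} {M : ι → Set U} {i j k : ι}

theorem smoothing_subset (hM : ∀ j k, j ≤ k → k < i → C.le (M j) (M k)) (hk : k < i) :
    smoothing M k ⊆ M k := by
  unfold smoothing
  split_ifs
  · exact iUnion₂_subset fun j hj => C.subset_of_le (hM j k (le_of_lt hj) hk)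
  · rfl

theorem le_smoothing (hM : ∀ j k, j ≤ k → k < i → C.le (M j) (M k))
    (hsup : ∀ k < i, IsChainLimit k → C.IsStrongSup (M '' Iio k) (⋃ j ∈ Iio k, M j))
    (hjk : j < k) (hk : k < i) : C.le (M j) (smoothing M k) := by
  unfold smoothing
  split_ifs with hlim
  · exact (hsup k hk hlim).1 _ (mem_image_of_mem M hjk)
  · exact hM j k hjk.le hk

theorem smoothing_le {P : Set U}
    (hsup : ∀ k < i, IsChainLimit k → C.IsStrongSup (M '' Iio k) (⋃ j ∈ Iio k, M j))
    (hk : k < i) (hP : ∀ j ≤ k, C.le (M j) P) : C.le (smoothing M k) P := by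
  unfold smoothing
  split_ifs with hlim
  · exact (hsup k hk hlim).2 P (forall_mem_image.2 fun j hj => hP j (le_of_lt hj))
  · exact hP k le_rfl

theorem mem_smoothing (hM : ∀ j k, j ≤ k → k < i → C.le (M j) (M k))
    (hsup : ∀ k < i, IsChainLimit k → C.IsStrongSup (M '' Iio k) (⋃ j ∈ Iio k, M j))
    (hk : k < i) : C.mem (smoothing M k) := by
  by_cases hlim : IsChainLimit k
  · obtain ⟨j, hj⟩ := hlim.1
    exact C.le_mem_right (le_smoothing hM hsup hj hk)
  · rw [smoothing, if_neg hlim]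
    exact C.le_mem_left (hM k k le_rfl hk)

theorem smoothing_mono (hM : ∀ j k, j ≤ k → k < i → C.le (M j) (M k))
    (hsup : ∀ k < i, IsChainLimit k → C.IsStrongSup (M '' Iio k) (⋃ j ∈ Iio k, M j))
    (hjk : j ≤ k) (hk : k < i) : C.le (smoothing M j) (smoothing M k) := by
  rcases hjk.lt_or_eq with hjk | rfl
  · exact smoothing_le hsup (hjk.trans hk) fun l hl => le_smoothing hM hsup (hl.trans_lt hjk) hk
  · exact C.le_refl (mem_smoothing hM hsup hk)

theorem biUnion_smoothing (hM : ∀ j k, j ≤ k → k < i → C.le (M j) (M k))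
    (hsup : ∀ k < i, IsChainLimit k → C.IsStrongSup (M '' Iio k) (⋃ j ∈ Iio k, M j))
    (hk : k ≤ i) (hlim : IsChainLimit k) : ⋃ l ∈ Iio k, smoothing M l = ⋃ j ∈ Iio k, M j := by
  refine (biUnion_mono subset_rfl fun l hl => smoothing_subset hM (hl.trans_le hk)).antisymm ?_
  refine iUnion₂_subset fun j hj => ?_
  obtain ⟨l, hjl, hlk⟩ := hlim.2 j hj
  exact (C.subset_of_le (le_smoothing hM hsup hjl (hlk.trans_le hk))).trans
    (subset_biUnion_of_mem (u := fun l => smoothing M l) hlk)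

theorem isStrongSup_of_smoothing [WellFoundedLT ι]
    (hM : ∀ j k, j ≤ k → k < i → C.le (M j) (M k))
    (hsup : ∀ k < i, IsChainLimit k → C.IsStrongSup (M '' Iio k) (⋃ j ∈ Iio k, M j))
    (hi : IsChainLimit i) : C.IsStrongSup (M '' Iio i) (⋃ j ∈ Iio i, M j) := by
  let N : Iio i → Set U := fun k => smoothing M k
  have hchain : ∀ k l : Iio i, k ≤ l → C.le (N k) (N l) := fun k l hkl =>
    smoothing_mono hM hsup hkl l.2
  have hcont : ∀ k : Iio i, IsChainLimit k → N k = ⋃ l ∈ Iio k, N l := by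
    intro k hk
    replace hk : IsChainLimit k.1 := isChainLimit_iff_isSuccLimit_s13.2 <|
      (principalSegIio i : Iio i ≤i ι).map_isSuccLimit (isChainLimit_iff_isSuccLimit_s13.1 hk)
    have hIio : Subtype.val '' Iio k = Iio k.1 := (principalSegIio i : Iio i ≤i ι).image_Iio k
    simp only [N]
    rw [smoothing, if_pos hk, ← biUnion_smoothing hM hsup k.2.le hk, ← hIio, biUnion_image]
  have hunion : ⋃ k, N k = ⋃ j ∈ Iio i, M j := by
    rw [← biUnion_smoothing hM hsup le_rfl hi, biUnion_eq_iUnion]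
  have hne : Nonempty (Iio i) := let ⟨j, hj⟩ := hi.1; ⟨⟨j, hj⟩⟩
  rw [← hunion]
  refine ⟨forall_mem_image.2 fun j hj => ?_, fun P hP =>
    C.chain_union_le N P hne hchain hcont fun k => ?_⟩
  · obtain ⟨k, hjk, hki⟩ := hi.2 j hj
    exact C.le_trans (le_smoothing hM hsup hjk hki) (C.chain_le_union N hchain hcont ⟨k, hki⟩)
  · exact smoothing_le hsup k.2 fun j hj => hP _ (mem_image_of_mem M (hj.trans_lt k.2))

end Smoothing

theorem isStrongSup_biUnion_Iio_of_isChainLimit {ι : Type u} [LinearOrder ι] [WellFoundedLT ι]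
    {M : ι → Set U} (i : ι) (hi : IsChainLimit i) (hM : ∀ j k, j ≤ k → k < i → C.le (M j) (M k)) :
    C.IsStrongSup (M '' Iio i) (⋃ j ∈ Iio i, M j) := by
  induction i using WellFoundedLT.induction with
  | _ i ih =>
    exact isStrongSup_of_smoothing hM
      (fun k hki hk => ih k hki hk fun j l hjl hl => hM j l hjl (hl.trans hki)) hi

theorem isStrongSup_biUnion_Iio_of_isSuccLimit {δ : Ordinal.{u}} (hδ : Order.IsSuccLimit δ)
    {M : Ordinal.{u} → Set U} (hM : ∀ α β, α ≤ β → β < δ → C.le (M α) (M β)) :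
    C.IsStrongSup (M '' Iio δ) (⋃ α ∈ Iio δ, M α) := by
  -- the chain axioms need an index type in `Type u`, and `δ` must be an element of it
  let f : (Order.succ δ).ToType ≤i Ordinal.{u} :=
    Ordinal.ToType.mk.symm.toInitialSeg.trans (principalSegIio (Order.succ δ))
  let i : (Order.succ δ).ToType := Ordinal.ToType.mk ⟨δ, Order.lt_succ δ⟩
  have hfi : f i = δ := by simp [f, i]; rfl
  have hIio : f '' Iio i = Iio δ := by rw [f.image_Iio, hfi]
  have hi : IsChainLimit i := by
    rw [isChainLimit_iff_isSuccLimit_s13, ← f.isSuccLimit_apply_iff, hfi]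
    exact hδ
  have hsup := C.isStrongSup_biUnion_Iio_of_isChainLimit (M := M ∘ f) i hi fun j k hjk hk =>
    hM _ _ (f.le_iff_le.2 hjk) ((f.lt_iff_lt.2 hk).trans_eq hfi)
  rwa [← hIio, biUnion_image, ← image_comp]

theorem biUnion_mem_Kcard {lam : Cardinal.{u}} (hlam : ℵ₀ ≤ lam) {δ : Ordinal.{u}}
    (hδ : δ.card ≤ lam) (hpos : 0 < δ) {M : Ordinal.{u} → Set U}
    (hM : ∀ α < δ, M α ∈ C.Kcard lam) (hmem : C.mem (⋃ α ∈ Iio δ, M α)) :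
    (⋃ α ∈ Iio δ, M α) ∈ C.Kcard lam :=
  ⟨hmem, le_antisymm (mk_biUnion_le_of_le hδ hlam M fun α hα => (hM α hα).2.le)
    ((hM 0 hpos).2.symm.le.trans (mk_le_mk_of_subset (subset_biUnion_of_mem (u := M) hpos)))⟩

theorem reduced_biUnion {ι : Type*} {lam : Cardinal.{u}} {s : Set ι} {M0 M1 : ι → Set U}
    {a : U} (hred : ∀ i ∈ s, C.Reduced lam (M0 i) (M1 i) a)
    (hK3 : C.K3 lam (⋃ i ∈ s, M0 i) (⋃ i ∈ s, M1 i) a)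
    (hle0 : ∀ i ∈ s, C.le (M0 i) (⋃ j ∈ s, M0 j)) (hle1 : ∀ i ∈ s, C.le (M1 i) (⋃ j ∈ s, M1 j)) :
    C.Reduced lam (⋃ i ∈ s, M0 i) (⋃ i ∈ s, M1 i) a := by
  refine ⟨hK3, fun M0' M1' hK3' hle0' hle1' => subset_antisymm ?_
    (subset_inter (C.subset_of_le hle0') (C.subset_of_le hK3.2.2.1))⟩
  rintro x ⟨hx0', hx1⟩
  obtain ⟨i, hi, hxi⟩ := mem_iUnion₂.1 hx1
  have hinter := (hred i hi).2 M0' M1' hK3' (C.le_trans (hle0 i hi) hle0')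
    (C.le_trans (hle1 i hi) hle1')
  exact mem_biUnion hi (hinter ▸ ⟨hx0', hxi⟩)

theorem k3_biUnion_Iio {lam : Cardinal.{u}} (hlam : ℵ₀ ≤ lam) {δ : Ordinal.{u}}
    (hδ : δ.card ≤ lam) (hpos : 0 < δ) {M0 M1 : Ordinal.{u} → Set U} {a : U}
    (hK3 : ∀ α < δ, C.K3 lam (M0 α) (M1 α) a)
    (hsup0 : C.IsStrongSup (M0 '' Iio δ) (⋃ α ∈ Iio δ, M0 α))
    (hsup1 : C.IsStrongSup (M1 '' Iio δ) (⋃ α ∈ Iio δ, M1 α)) :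
    C.K3 lam (⋃ α ∈ Iio δ, M0 α) (⋃ α ∈ Iio δ, M1 α) a :=
  ⟨C.biUnion_mem_Kcard hlam hδ hpos (fun α hα => (hK3 α hα).1)
      (C.le_mem_right (hsup0.1 _ ⟨0, hpos, rfl⟩)),
    C.biUnion_mem_Kcard hlam hδ hpos (fun α hα => (hK3 α hα).2.1)
      (C.le_mem_right (hsup1.1 _ ⟨0, hpos, rfl⟩)),
    hsup0.2 _ (forall_mem_image.2 fun β hβ =>
      C.le_trans (hK3 β hβ).2.2.1 (hsup1.1 _ (mem_image_of_mem M1 hβ))),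
    mem_biUnion hpos (hK3 0 hpos).2.2.2.1,
    fun ha => let ⟨β, hβ, haβ⟩ := mem_iUnion₂.1 ha; (hK3 β hβ).2.2.2.2 haβ⟩

/-- Fact 2.4(2)(c): the union of an increasing sequence of reduced triples of
`K³_lam`, indexed by a limit ordinal `δ < lam⁺`, is a reduced triple. -/
theorem reduced_union (lam : Cardinal.{u}) (hLS : C.LS ≤ lam)
    (δ : Ordinal.{u}) (hlim : Order.IsSuccLimit δ) (hδ : δ < (Order.succ lam).ord)
    (M0 M1 : Ordinal.{u} → Set U) (a : U)
    (hred : ∀ α < δ, C.Reduced lam (M0 α) (M1 α) a)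
    (hmono0 : ∀ α β, α ≤ β → β < δ → C.le (M0 α) (M0 β))
    (hmono1 : ∀ α β, α ≤ β → β < δ → C.le (M1 α) (M1 β)) :
    C.Reduced lam (⋃ α ∈ Set.Iio δ, M0 α) (⋃ α ∈ Set.Iio δ, M1 α) a := by
  have hsup0 := C.isStrongSup_biUnion_Iio_of_isSuccLimit hlim hmono0
  have hsup1 := C.isStrongSup_biUnion_Iio_of_isSuccLimit hlim hmono1
  have hK3 := C.k3_biUnion_Iio (C.aleph0_le_LS.trans hLS) (Order.lt_succ_iff.1 (lt_ord.1 hδ))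
    hlim.pos (fun α hα => (hred α hα).1) hsup0 hsup1
  exact C.reduced_biUnion hred hK3 (fun β hβ => hsup0.1 _ (mem_image_of_mem M0 hβ))
    (fun β hβ => hsup1.1 _ (mem_image_of_mem M1 hβ))

end AEC
end
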